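/- (Mean-square convergence of predicted conditionals) Under the universal mixture assumption, E_μ[(μ(x_k|x_{<k}) − ξ(x_k|x_{<k}))²] → 0 as k → ∞, where the expectation is over histories x_{1:k} drawn from μ (summing the squared difference over the k-th symbol weighted by μ(x_{<k})). -/

import Mathlib

/-!
By the inequality `(p - q)² / 2 ≤ p log (p / q) - p + q` on `[0, 1]`, the `k`-th term is at most
twice the expected conditional relative entropy of `μ` to `ξ` at time `k`. By the chain rule these
expected conditional entropies add up to the relative entropy of `μ` to `ξ` on strings of length
`n`, which is at most `ln (1 / w_μ)` because `ξ ≥ w_μ μ`. So the nonnegative terms form a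
convergent series and tend to zero.
-/

open scoped BigOperators

/-- Conditional probability ρ(a | l) := ρ(l·a)/ρ(l) via Bayes' rule. -/
noncomputable def condP {A : Type} [Fintype A] (ρ : List A → ℝ) (l : List A) (a : A) : ℝ :=
  ρ (l ++ [a]) / ρ l

/-- Cumulative expected conditional relative entropy H_n between μ and ξ. -/
noncomputable def relEnt {A : Type} [Fintype A] (μ ξ : List A → ℝ) (n : ℕ) : ℝ :=
  ∑ k ∈ Finset.range n, ∑ x : Fin k → A, μ (List.ofFn x) *
    ∑ a : A, condP μ (List.ofFn x) a * Real.log (condP μ (List.ofFn x) a / condP ξ (List.ofFn x) a)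

open Filter

open Finset Real InformationTheory

lemma sq_sub_div_two_le_mul_log_div_sub_add {p q : ℝ} (hp0 : 0 ≤ p) (hp1 : p ≤ 1)
    (hq0 : 0 < q) (hq1 : q ≤ 1) : (p - q) ^ 2 / 2 ≤ p * log (p / q) - p + q := by
  set g : ℝ → ℝ := fun x => q * klFun (x / q) - (x - q) ^ 2 / 2
  have hg : Continuous g := by fun_prop
  have hg' : ∀ x, 0 < x → HasDerivAt g (log (x / q) - (x - q)) x := by
    intro x hx
    have hkl := ((hasDerivAt_klFun (div_pos hx hq0).ne').comp x
      ((hasDerivAt_id x).div_const q)).const_mul q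
    refine (hkl.sub ((((hasDerivAt_id x).sub_const q).pow 2).div_const 2)).congr_deriv ?_
    simp only [id]
    field_simp
    ring
  have hgq : g q = 0 := by simp [g, div_self hq0.ne', klFun_one]
  have hgp : g p = p * log (p / q) - p + q - (p - q) ^ 2 / 2 := by
    simp only [g, klFun_apply]
    field_simp
    ring
  suffices g q ≤ g p by linarith
  rcases le_total p q with hpq | hqp
  · refine antitoneOn_of_hasDerivWithinAt_nonpos (f' := fun x => log (x / q) - (x - q))
      (convex_Icc 0 q) hg.continuousOn
      (fun x hx => ?_) (fun x hx => ?_) ⟨hp0, hpq⟩ ⟨hq0.le, le_rfl⟩ hpq <;>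
      rw [interior_Icc] at hx
    · exact (hg' x hx.1).hasDerivWithinAt
    have hlog := log_le_sub_one_of_pos (div_pos hx.1 hq0)
    have : x / q - 1 ≤ x - q := by
      rw [div_sub_one hq0.ne', div_le_iff₀ hq0]
      nlinarith [hx.2]
    linarith
  · refine monotoneOn_of_hasDerivWithinAt_nonneg (f' := fun x => log (x / q) - (x - q))
      (convex_Icc q 1) hg.continuousOn
      (fun x hx => ?_) (fun x hx => ?_) ⟨le_rfl, hq1⟩ ⟨hqp, hp1⟩ hqp <;>
      rw [interior_Icc] at hx
    · exact (hg' x (hq0.trans hx.1)).hasDerivWithinAt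
    have hx0 := hq0.trans hx.1
    have hlog := one_sub_inv_le_log_of_pos (div_pos hx0 hq0)
    have : x - q ≤ 1 - (x / q)⁻¹ := by
      rw [inv_div, one_sub_div hx0.ne', le_div_iff₀ hx0]
      nlinarith [mul_pos (sub_pos.2 hx.1) (sub_pos.2 hx.2)]
    linarith

lemma sum_sq_sub_le_two_mul_sum_mul_log {ι : Type*} [Fintype ι] {p q : ι → ℝ}
    (hp0 : ∀ i, 0 ≤ p i) (hp1 : ∀ i, p i ≤ 1) (hq0 : ∀ i, 0 ≤ q i) (hq1 : ∀ i, q i ≤ 1)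
    (hpq : ∀ i, q i = 0 → p i = 0) (hsum : ∑ i, p i = ∑ i, q i) :
    ∑ i, (p i - q i) ^ 2 ≤ 2 * ∑ i, p i * log (p i / q i) := by
  have hterm : ∀ i, (p i - q i) ^ 2 / 2 ≤ p i * log (p i / q i) - p i + q i := fun i => by
    rcases (hq0 i).eq_or_lt with hqi | hqi
    · simp [← hqi, hpq i hqi.symm]
    · exact sq_sub_div_two_le_mul_log_div_sub_add (hp0 i) (hp1 i) hqi (hq1 i)
  have := sum_le_sum fun i (_ : i ∈ univ) => hterm i
  rw [← sum_div, sum_add_distrib, sum_sub_distrib, hsum] at this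
  linarith

lemma List.ofFn_snoc {α : Type*} {n : ℕ} (x : Fin n → α) (a : α) :
    List.ofFn (Fin.snoc x a) = List.ofFn x ++ [a] := by
  rw [List.ofFn_succ']
  simp [List.concat_eq_append]

section SequenceMeasures

variable {A : Type} [Fintype A]

lemma sum_ofFn_succ (f : List A → ℝ) (n : ℕ) :
    ∑ y : Fin (n + 1) → A, f (List.ofFn y)
      = ∑ x : Fin n → A, ∑ a : A, f (List.ofFn x ++ [a]) := by
  rw [← (Fin.snocEquiv fun _ => A).sum_comp, Fintype.sum_prod_type, sum_comm]
  exact sum_congr rfl fun x _ => sum_congr rfl fun a _ => congrArg f (List.ofFn_snoc x a)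

/-- A probability measure on infinite sequences over `A`, given by its values on cylinders. -/
structure IsSeqMeasure (ρ : List A → ℝ) : Prop where
  nonneg : ∀ l, 0 ≤ ρ l
  nil : ρ [] = 1
  sum_append_singleton : ∀ l, ∑ a : A, ρ (l ++ [a]) = ρ l

namespace IsSeqMeasure

variable {ρ : List A → ℝ} (hρ : IsSeqMeasure ρ)
include hρ

lemma apply_append_singleton_le (l : List A) (a : A) : ρ (l ++ [a]) ≤ ρ l :=
  hρ.sum_append_singleton l ▸ single_le_sum (fun b _ => hρ.nonneg (l ++ [b])) (mem_univ a)

lemma le_one (l : List A) : ρ l ≤ 1 := by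
  induction l using List.reverseRecOn with
  | nil => exact hρ.nil.le
  | append_singleton l a ih => exact (hρ.apply_append_singleton_le l a).trans ih

lemma sum_ofFn (n : ℕ) : ∑ x : Fin n → A, ρ (List.ofFn x) = 1 := by
  induction n with
  | zero => simp [hρ.nil]
  | succ n ih => simp only [sum_ofFn_succ, hρ.sum_append_singleton, ih]

lemma condP_nonneg (l : List A) (a : A) : 0 ≤ condP ρ l a :=
  div_nonneg (hρ.nonneg _) (hρ.nonneg l)

lemma condP_le_one (l : List A) (a : A) : condP ρ l a ≤ 1 :=
  div_le_one_of_le₀ (hρ.apply_append_singleton_le l a) (hρ.nonneg l)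

lemma sum_condP {l : List A} (hl : ρ l ≠ 0) : ∑ a : A, condP ρ l a = 1 := by
  simp only [condP]
  rw [← sum_div, hρ.sum_append_singleton, div_self hl]

lemma eq_zero_of_mul_le {σ : List A → ℝ} {c : ℝ} (hc : 0 < c) (hdom : ∀ l, c * ρ l ≤ σ l)
    {l : List A} (hl : σ l = 0) : ρ l = 0 :=
  le_antisymm (nonpos_of_mul_nonpos_right (hl ▸ hdom l) hc) (hρ.nonneg l)

lemma apply_append_singleton_eq_zero {l : List A} (hl : ρ l = 0) (a : A) : ρ (l ++ [a]) = 0 :=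
  le_antisymm (hl ▸ hρ.apply_append_singleton_le l a) (hρ.nonneg _)

end IsSeqMeasure

section Mixture

variable {ι : Type*} {ρs : ι → List A → ℝ} {w : ι → ℝ}

lemma summable_mul_of_isSeqMeasure (hρs : ∀ i, IsSeqMeasure (ρs i)) (hw0 : ∀ i, 0 ≤ w i)
    (hw : HasSum w 1) (l : List A) : Summable fun i => w i * ρs i l :=
  hw.summable.of_nonneg_of_le (fun i => mul_nonneg (hw0 i) ((hρs i).nonneg l))
    fun i => mul_le_of_le_one_right (hw0 i) ((hρs i).le_one l)

lemma IsSeqMeasure.tsum_mul (hρs : ∀ i, IsSeqMeasure (ρs i)) (hw0 : ∀ i, 0 ≤ w i)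
    (hw : HasSum w 1) : IsSeqMeasure fun l => ∑' i, w i * ρs i l where
  nonneg l := tsum_nonneg fun i => mul_nonneg (hw0 i) ((hρs i).nonneg l)
  nil := by simpa only [(hρs _).nil, mul_one] using hw.tsum_eq
  sum_append_singleton l := by
    rw [← Summable.tsum_finsetSum fun a _ => summable_mul_of_isSeqMeasure hρs hw0 hw (l ++ [a])]
    simp only [← mul_sum, (hρs _).sum_append_singleton]

lemma mul_le_tsum_mul_of_isSeqMeasure (hρs : ∀ i, IsSeqMeasure (ρs i)) (hw0 : ∀ i, 0 ≤ w i)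
    (hw : HasSum w 1) (i : ι) (l : List A) : w i * ρs i l ≤ ∑' j, w j * ρs j l :=
  (summable_mul_of_isSeqMeasure hρs hw0 hw l).le_tsum i
    fun j _ => mul_nonneg (hw0 j) ((hρs j).nonneg l)

end Mixture

end SequenceMeasures

section Conditionals

variable {A : Type} [Fintype A] {ρ σ : List A → ℝ}

lemma sum_sq_sub_condP_le (hρ : IsSeqMeasure ρ) (hσ : IsSeqMeasure σ)
    (hac : ∀ l, σ l = 0 → ρ l = 0) {l : List A} (hl : ρ l ≠ 0) :
    ∑ a : A, (condP ρ l a - condP σ l a) ^ 2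
      ≤ 2 * ∑ a : A, condP ρ l a * log (condP ρ l a / condP σ l a) := by
  have hσl : σ l ≠ 0 := fun h => hl (hac l h)
  refine sum_sq_sub_le_two_mul_sum_mul_log (hρ.condP_nonneg l) (hρ.condP_le_one l)
    (hσ.condP_nonneg l) (hσ.condP_le_one l) (fun a ha => ?_)
    (by rw [hρ.sum_condP hl, hσ.sum_condP hσl])
  rw [condP, div_eq_zero_iff, or_iff_left hσl] at ha
  rw [condP, hac _ ha, zero_div]

/-- The chain rule for relative entropy, one symbol at a time. -/
lemma sum_mul_log_append_singleton (hρ : IsSeqMeasure ρ) (hac : ∀ l, σ l = 0 → ρ l = 0)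
    (l : List A) :
    ∑ a : A, ρ (l ++ [a]) * log (ρ (l ++ [a]) / σ (l ++ [a]))
      = ρ l * log (ρ l / σ l) + ρ l * ∑ a : A, condP ρ l a * log (condP ρ l a / condP σ l a) := by
  rcases eq_or_ne (ρ l) 0 with hl | hl
  · simp [hl, hρ.apply_append_singleton_eq_zero hl]
  have hσl : σ l ≠ 0 := fun h => hl (hac l h)
  have hsplit : ρ l * log (ρ l / σ l) = ∑ a : A, ρ (l ++ [a]) * log (ρ l / σ l) := by
    rw [← sum_mul, hρ.sum_append_singleton]
  rw [hsplit, mul_sum, ← sum_add_distrib]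
  refine sum_congr rfl fun a _ => ?_
  rw [← mul_assoc, condP, mul_div_cancel₀ _ hl, ← mul_add]
  rcases eq_or_ne (ρ (l ++ [a])) 0 with hla | hla
  · simp [hla]
  have hσla : σ (l ++ [a]) ≠ 0 := fun h => hla (hac _ h)
  rw [condP, ← log_mul (by positivity) ?_]
  · congr 2
    field_simp
  · exact div_ne_zero (div_ne_zero hla hl) (div_ne_zero hσla hσl)

lemma relEnt_eq_sum_mul_log (hρ : IsSeqMeasure ρ) (hσ : IsSeqMeasure σ)
    (hac : ∀ l, σ l = 0 → ρ l = 0) (n : ℕ) :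
    relEnt ρ σ n = ∑ x : Fin n → A, ρ (List.ofFn x) * log (ρ (List.ofFn x) / σ (List.ofFn x)) := by
  induction n with
  | zero => simp [relEnt, hρ.nil, hσ.nil]
  | succ n ih =>
    rw [relEnt, sum_range_succ, ← relEnt, ih, sum_ofFn_succ (fun l => ρ l * log (ρ l / σ l))]
    simp only [sum_mul_log_append_singleton hρ hac, sum_add_distrib]

lemma relEnt_le_neg_log (hρ : IsSeqMeasure ρ) (hσ : IsSeqMeasure σ) {c : ℝ} (hc : 0 < c)
    (hdom : ∀ l, c * ρ l ≤ σ l) (n : ℕ) : relEnt ρ σ n ≤ -log c := by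
  have hac : ∀ l, σ l = 0 → ρ l = 0 := fun _ => hρ.eq_zero_of_mul_le hc hdom
  have hbound : ∀ l, ρ l * log (ρ l / σ l) ≤ ρ l * -log c := fun l => by
    rcases (hρ.nonneg l).eq_or_lt with hl | hl
    · simp [← hl]
    have hσl : 0 < σ l := (mul_pos hc hl).trans_le (hdom l)
    have hratio : ρ l / σ l ≤ c⁻¹ := by
      rw [div_le_iff₀ hσl, ← div_eq_inv_mul, le_div_iff₀ hc]
      linarith [hdom l]
    rw [← log_inv]
    exact mul_le_mul_of_nonneg_left (log_le_log (div_pos hl hσl) hratio) hl.le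
  rw [relEnt_eq_sum_mul_log hρ hσ hac]
  calc _ ≤ ∑ x : Fin n → A, ρ (List.ofFn x) * -log c := sum_le_sum fun x _ => hbound _
    _ = -log c := by rw [← sum_mul, hρ.sum_ofFn, one_mul]

lemma sum_mul_sum_sq_sub_condP_le (hρ : IsSeqMeasure ρ) (hσ : IsSeqMeasure σ)
    (hac : ∀ l, σ l = 0 → ρ l = 0) (k : ℕ) :
    ∑ x : Fin k → A, ρ (List.ofFn x) *
        ∑ a : A, (condP ρ (List.ofFn x) a - condP σ (List.ofFn x) a) ^ 2
      ≤ 2 * (relEnt ρ σ (k + 1) - relEnt ρ σ k) := by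
  rw [relEnt, relEnt, sum_range_succ, add_sub_cancel_left, mul_sum]
  refine sum_le_sum fun x _ => ?_
  rcases eq_or_ne (ρ (List.ofFn x)) 0 with hx | hx
  · simp [hx]
  rw [mul_left_comm]
  exact mul_le_mul_of_nonneg_left (sum_sq_sub_condP_le hρ hσ hac hx) (hρ.nonneg _)

theorem tendsto_sum_mul_sum_sq_sub_condP (hρ : IsSeqMeasure ρ) (hσ : IsSeqMeasure σ) {c : ℝ}
    (hc : 0 < c) (hdom : ∀ l, c * ρ l ≤ σ l) :
    Tendsto (fun k : ℕ => ∑ x : Fin k → A, ρ (List.ofFn x) *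
        ∑ a : A, (condP ρ (List.ofFn x) a - condP σ (List.ofFn x) a) ^ 2) atTop (nhds 0) := by
  have hac : ∀ l, σ l = 0 → ρ l = 0 := fun _ => hρ.eq_zero_of_mul_le hc hdom
  refine (summable_of_sum_range_le (c := 2 * -log c) (fun k => ?_) fun n => ?_).tendsto_atTop_zero
  · exact sum_nonneg fun x _ => mul_nonneg (hρ.nonneg _) (sum_nonneg fun a _ => sq_nonneg _)
  calc _ ≤ ∑ k ∈ range n, 2 * (relEnt ρ σ (k + 1) - relEnt ρ σ k) :=
        sum_le_sum fun k _ => sum_mul_sum_sq_sub_condP_le hρ hσ hac k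
    _ = 2 * relEnt ρ σ n := by
      rw [← mul_sum, sum_range_sub, show relEnt ρ σ 0 = 0 from sum_range_zero _, sub_zero]
    _ ≤ 2 * -log c := by linarith [relEnt_le_neg_log hρ hσ hc hdom n]

end Conditionals

/-- Mean-square convergence of predicted conditionals: the μ-expected squared
difference of the conditional probabilities of μ and ξ tends to 0 as k → ∞. -/
theorem mean_square_term_tendsto_zero {A : Type} [Fintype A]
    (μs : ℕ → List A → ℝ) (w : ℕ → ℝ)
    (hwpos : ∀ i, 0 < w i) (hwsum : HasSum w 1)
    (hnn : ∀ i l, 0 ≤ μs i l)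
    (hroot : ∀ i, μs i [] = 1)
    (hcompat : ∀ i l, ∑ a : A, μs i (l ++ [a]) = μs i l)
    (ξ : List A → ℝ) (hξ : ∀ l, ξ l = ∑' i, w i * μs i l)
    (i0 : ℕ)
    :
    Tendsto (fun k : ℕ => ∑ x : Fin k → A, μs i0 (List.ofFn x) *
        ∑ a : A, (condP (μs i0) (List.ofFn x) a - condP ξ (List.ofFn x) a) ^ 2)
      atTop (nhds 0) := by
  obtain rfl : ξ = fun l => ∑' i, w i * μs i l := funext hξ
  have hμs : ∀ i, IsSeqMeasure (μs i) := fun i => ⟨hnn i, hroot i, hcompat i⟩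
  have hw0 : ∀ i, 0 ≤ w i := fun i => (hwpos i).le
  exact tendsto_sum_mul_sum_sq_sub_condP (hμs i0) (IsSeqMeasure.tsum_mul hμs hw0 hwsum)
    (hwpos i0) (mul_le_tsum_mul_of_isSeqMeasure hμs hw0 hwsum i0)
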